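/- Let R ⊆ [0,1]ˢ be a rectangle with side lengths μ₁,…,μ_s, and let f : [0,1]ˢ → ℝ satisfy |f(x) − f(y)| ≥ (∑ᵢ αᵢ²(xᵢ − yᵢ)²)^{1/2} for all x, y ∈ R, where αᵢ > 0. Then, with X uniform on R, Var[f(X) | X ∈ R] ≥ (1/12)∑_{i=1}^s αᵢ²μᵢ². -/

import Mathlib

open MeasureTheory ProbabilityTheory

noncomputable section

/-- The unit hypercube `[0,1]^s`. -/
def unitCube (s : ℕ) : Set (Fin s → ℝ) := Set.Icc 0 1

/-- The uniform distribution on a subset `R` of `ℝ^s` (Lebesgue measure conditioned on `R`). -/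
def unif {s : ℕ} (R : Set (Fin s → ℝ)) : Measure (Fin s → ℝ) :=
  (volume : Measure (Fin s → ℝ))[|R]

/-- `Δ(R)`: variance of `f` under the uniform distribution on `R`. -/
def strataVar {s : ℕ} (f : (Fin s → ℝ) → ℝ) (R : Set (Fin s → ℝ)) : ℝ :=
  variance f (unif R)

/-- `R[j]⁻`: lower half of the rectangle `Icc a b` split at the midpoint of its `j`-th side. -/
def lowerHalf {s : ℕ} (a b : Fin s → ℝ) (j : Fin s) : Set (Fin s → ℝ) :=
  Set.Icc a (Function.update b j ((a j + b j) / 2))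

/-- `R[j]⁺`: upper half of the rectangle `Icc a b` split at the midpoint of its `j`-th side. -/
def upperHalf {s : ℕ} (a b : Fin s → ℝ) (j : Fin s) : Set (Fin s → ℝ) :=
  Set.Icc (Function.update a j ((a j + b j) / 2)) b

/-- Law of `N` i.i.d. points uniform on `[0,1]^s`. -/
def mcMeasure (s N : ℕ) : Measure (Fin N → (Fin s → ℝ)) :=
  Measure.pi fun _ => unif (unitCube s)

/-- The standard Monte Carlo estimator of `∫_{[0,1]^s} f` based on `N` points. -/
def mcEst {s : ℕ} (N : ℕ) (f : (Fin s → ℝ) → ℝ) : (Fin N → (Fin s → ℝ)) → ℝ :=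
  fun ω => (∑ n, f (ω n)) / N

/-! Let `X, X'` be independent and uniform on `R`. Then `Var f(X) = ½ E (f X - f X')²`, and the
hypothesis bounds the integrand below by `∑ αᵢ² (Xᵢ - X'ᵢ)²`, whose expectation is
`∑ αᵢ² · 2 Var Xᵢ`. Since `volume[|R]` is the product of the uniform laws on the sides of `R`,
each coordinate `Xᵢ` is uniform on an interval of length `μᵢ`, so `Var Xᵢ = μᵢ² / 12`. -/

open Set

section Variance

variable {Ω : Type*} {mΩ : MeasurableSpace Ω} {μ : Measure Ω}

lemma integrable_prod_sub_sq [IsFiniteMeasure μ] {X : Ω → ℝ} (hX : MemLp X 2 μ) :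
    Integrable (fun p : Ω × Ω ↦ (X p.1 - X p.2) ^ 2) (μ.prod μ) :=
  ((hX.comp_fst μ).sub (hX.comp_snd μ)).integrable_sq

variable [IsProbabilityMeasure μ]

lemma integral_prod_sub_sq_eq_two_mul_variance {X : Ω → ℝ} (hX : MemLp X 2 μ) :
    ∫ p, (X p.1 - X p.2) ^ 2 ∂μ.prod μ = 2 * Var[X; μ] := by
  have hD : MemLp (fun p : Ω × Ω ↦ X p.1 + (-X) p.2) 2 (μ.prod μ) :=
    (hX.comp_fst μ).add (hX.neg.comp_snd μ)
  have hmean : ∫ p, (X p.1 + (-X) p.2) ∂μ.prod μ = 0 := by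
    rw [integral_add ((hX.integrable one_le_two).comp_fst μ)
      ((hX.neg.integrable one_le_two).comp_snd μ), integral_fun_fst, integral_fun_snd]
    simp [integral_neg]
  have hvar := variance_eq_sub hD
  rw [variance_add_prod hX hX.neg, variance_neg, hmean] at hvar
  simp only [Pi.neg_apply, ← sub_eq_add_neg, Pi.pow_apply] at hvar
  linarith

lemma sum_mul_variance_le_variance {ι : Type*} [Fintype ι] {S : Set Ω} (hS : ∀ᵐ x ∂μ, x ∈ S)
    {X : ι → Ω → ℝ} (hX : ∀ i, MemLp (X i) 2 μ) {Y : Ω → ℝ} (hY : MemLp Y 2 μ) (c : ι → ℝ)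
    (hle : ∀ x ∈ S, ∀ y ∈ S, ∑ i, c i * (X i x - X i y) ^ 2 ≤ (Y x - Y y) ^ 2) :
    ∑ i, c i * Var[X i; μ] ≤ Var[Y; μ] := by
  have hS₂ : ∀ᵐ p ∂μ.prod μ, p.1 ∈ S ∧ p.2 ∈ S :=
    (Measure.quasiMeasurePreserving_fst.ae hS).and (Measure.quasiMeasurePreserving_snd.ae hS)
  have hint : ∀ i, Integrable (fun p : Ω × Ω ↦ c i * (X i p.1 - X i p.2) ^ 2) (μ.prod μ) :=
    fun i ↦ (integrable_prod_sub_sq (hX i)).const_mul (c i)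
  have hmono : ∫ p, ∑ i, c i * (X i p.1 - X i p.2) ^ 2 ∂μ.prod μ
      ≤ ∫ p, (Y p.1 - Y p.2) ^ 2 ∂μ.prod μ :=
    integral_mono_ae (integrable_finsetSum _ fun i _ ↦ hint i) (integrable_prod_sub_sq hY)
      (hS₂.mono fun p hp ↦ hle _ hp.1 _ hp.2)
  rw [integral_finsetSum _ fun i _ ↦ hint i] at hmono
  simp_rw [integral_const_mul, integral_prod_sub_sq_eq_two_mul_variance (hX _),
    integral_prod_sub_sq_eq_two_mul_variance hY, mul_left_comm _ (2 : ℝ), ← Finset.mul_sum] at hmono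
  linarith

end Variance

lemma cond_pi_pi {ι : Type*} [Fintype ι] {α : ι → Type*} [∀ i, MeasurableSpace (α i)]
    (μ : ∀ i, Measure (α i)) [∀ i, SigmaFinite (μ i)] {s : ∀ i, Set (α i)}
    (hs : ∀ i, MeasurableSet (s i)) (hs_top : ∀ i, μ i (s i) ≠ ⊤) :
    (Measure.pi μ)[|univ.pi s] = Measure.pi fun i ↦ (μ i)[|s i] := by
  refine (Measure.pi_eq fun t ht ↦ ?_).symm
  simp_rw [cond_apply (MeasurableSet.univ_pi hs), cond_apply (hs _), ← pi_inter_distrib,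
    Measure.pi_pi, Finset.prod_mul_distrib]
  rw [ENNReal.prod_inv_distrib fun i _ j _ _ ↦ .inr (hs_top j)]

lemma volume_cond_Icc_eq_pi {ι : Type*} [Fintype ι] (a b : ι → ℝ) :
    volume[|Icc a b] = Measure.pi fun i ↦ volume[|Icc (a i) (b i)] := by
  rw [← pi_univ_Icc, volume_pi,
    cond_pi_pi _ (fun _ ↦ measurableSet_Icc) fun _ ↦ measure_Icc_lt_top.ne]

lemma integral_cond_Icc {a b : ℝ} (hab : a ≤ b) (g : ℝ → ℝ) :
    ∫ x, g x ∂volume[|Icc a b] = (b - a)⁻¹ * ∫ x in a..b, g x := by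
  rw [ProbabilityTheory.cond, integral_smul_measure, Real.volume_Icc,
    intervalIntegral.integral_of_le hab, integral_Icc_eq_integral_Ioc, smul_eq_mul,
    ENNReal.toReal_inv, ENNReal.toReal_ofReal (sub_nonneg.2 hab)]

lemma variance_id_cond_Icc {a b : ℝ} (hab : a < b) :
    Var[id; volume[|Icc a b]] = (b - a) ^ 2 / 12 := by
  have hba : b - a ≠ 0 := (sub_pos.2 hab).ne'
  have hmean : ∫ x, id x ∂volume[|Icc a b] = (a + b) / 2 := by
    rw [integral_cond_Icc hab.le]
    simp only [id_eq]
    rw [integral_id]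
    field_simp
    ring
  rw [variance_eq_integral measurable_id.aemeasurable, hmean, integral_cond_Icc hab.le]
  simp only [id_eq]
  rw [intervalIntegral.integral_comp_sub_right (fun x ↦ x ^ 2), integral_pow]
  field_simp
  ring

lemma memLp_id_cond_Icc (a b : ℝ) (p : ENNReal) : MemLp id p (volume[|Icc a b]) :=
  MemLp.of_bound measurable_id.aestronglyMeasurable (max |a| |b|)
    ((ae_cond_mem measurableSet_Icc).mono fun _ hx ↦ abs_le_max_abs_abs hx.1 hx.2)

lemma isProbabilityMeasure_volume_cond_Icc {a b : ℝ} (hab : a < b) :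
    IsProbabilityMeasure (volume[|Icc a b]) :=
  cond_isProbabilityMeasure_of_finite (by simp [hab]) measure_Icc_lt_top.ne

section Box

variable {ι : Type*} [Fintype ι] {a b : ι → ℝ}

lemma measurePreserving_eval_volume_cond_Icc (hab : ∀ i, a i < b i) (i : ι) :
    MeasurePreserving (Function.eval i) (volume[|Icc a b]) (volume[|Icc (a i) (b i)]) := by
  have := fun j ↦ isProbabilityMeasure_volume_cond_Icc (hab j)
  rw [volume_cond_Icc_eq_pi]
  exact measurePreserving_eval _ i

lemma isProbabilityMeasure_volume_cond_Icc_pi (hab : ∀ i, a i < b i) :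
    IsProbabilityMeasure (volume[|Icc a b]) := by
  have := fun j ↦ isProbabilityMeasure_volume_cond_Icc (hab j)
  rw [volume_cond_Icc_eq_pi]
  infer_instance

lemma memLp_eval_volume_cond_Icc (hab : ∀ i, a i < b i) (i : ι) (p : ENNReal) :
    MemLp (fun x ↦ x i) p (volume[|Icc a b]) :=
  (memLp_id_cond_Icc _ _ p).comp_measurePreserving (measurePreserving_eval_volume_cond_Icc hab i)

lemma variance_eval_volume_cond_Icc (hab : ∀ i, a i < b i) (i : ι) :
    Var[fun x ↦ x i; volume[|Icc a b]] = (b i - a i) ^ 2 / 12 :=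
  ((measurePreserving_eval_volume_cond_Icc hab i).variance_fun_comp
    measurable_id.aemeasurable).trans (variance_id_cond_Icc (hab i))

end Box

theorem strata_variance_lower_bound_general {s : ℕ} (a b : Fin s → ℝ) (hab : ∀ i, a i < b i)
    (α : Fin s → ℝ)
    (f : (Fin s → ℝ) → ℝ) (hf : Measurable f)
    (hlow : ∀ x ∈ Set.Icc a b, ∀ y ∈ Set.Icc a b,
      Real.sqrt (∑ i, α i ^ 2 * (x i - y i) ^ 2) ≤ |f x - f y|) :
    ENNReal.ofReal ((1 / 12) * ∑ i, α i ^ 2 * (b i - a i) ^ 2) ≤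
      evariance f (unif (Set.Icc a b)) := by
  rw [unif]
  have := isProbabilityMeasure_volume_cond_Icc_pi hab
  by_cases hmem : MemLp f 2 (volume[|Icc a b])
  · rw [← hmem.ofReal_variance_eq]
    refine ENNReal.ofReal_le_ofReal ?_
    calc 1 / 12 * ∑ i, α i ^ 2 * (b i - a i) ^ 2
        = ∑ i, α i ^ 2 * Var[fun x ↦ x i; volume[|Icc a b]] := by
          rw [Finset.mul_sum]
          exact Finset.sum_congr rfl fun i _ ↦ by rw [variance_eval_volume_cond_Icc hab]; ring
      _ ≤ Var[f; volume[|Icc a b]] :=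
          sum_mul_variance_le_variance (ae_cond_mem measurableSet_Icc)
            (fun i ↦ memLp_eval_volume_cond_Icc hab i 2) hmem _ fun x hx y hy ↦
            (Real.sqrt_le_iff.1 (hlow x hx y hy)).2.trans_eq (sq_abs _)
  · rw [evariance_eq_top hf.aestronglyMeasurable hmem]
    exact le_top

/-- if `|f(x) − f(y)| ≥ (∑ᵢ αᵢ²(xᵢ − yᵢ)²)^{1/2}` for all `x, y` in the
rectangle `R = [a,b] ⊆ [0,1]^s` with positive side lengths `μᵢ = bᵢ − aᵢ`, then
`Var[f(X) | X ∈ R] ≥ (1/12)∑ᵢ αᵢ²μᵢ²`. The variance is expressed through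
`evariance` so that a possibly infinite variance is handled correctly. -/
theorem strata_variance_lower_bound {s : ℕ} (a b : Fin s → ℝ) (hab : ∀ i, a i < b i)
    (hsub : Set.Icc a b ⊆ unitCube s)
    (α : Fin s → ℝ) (hα : ∀ i, 0 < α i)
    (f : (Fin s → ℝ) → ℝ) (hf : Measurable f)
    (hlow : ∀ x ∈ Set.Icc a b, ∀ y ∈ Set.Icc a b,
      Real.sqrt (∑ i, α i ^ 2 * (x i - y i) ^ 2) ≤ |f x - f y|) :
    ENNReal.ofReal ((1 / 12) * ∑ i, α i ^ 2 * (b i - a i) ^ 2) ≤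
      evariance f (unif (Set.Icc a b)) :=
  strata_variance_lower_bound_general a b hab α f hf hlow
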